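/- Let n = 2m+1 be odd, μ an integer not divisible by n, and λ = exp(2πi/n). Then for every k = 1, …, n−1, the quantity (2/μ)·(cos(2πkμ/n) − 1) · c + λ^{−k}(1 − λ^k)²·s_k = 0, where c := −(2μ/n)·∑_{r=1}^{n−1} sin²(πr/n)·s_r and s_k := (τ/(n sin²(πk/n)))·(1 − cos(2πkμ/n)) for any τ ∈ ℂ. -/

import Mathlib

/-!
Since `λ^k = exp(2i·πk/n)`, one has `λ^{-k}(1 - λ^k)² = -4 sin²(πk/n)`, and
`sin²(πr/n)·s_r = (τ/n)(1 - cos(2πrμ/n))`. Summing the latter over a full period, the cosines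
sum to zero because `exp(2πiμ/n)` is an `n`-th root of unity different from `1`; hence
`c = -(2μ/n)·τ`, and both terms of the system equal `±(4τ/n)(1 - cos(2πkμ/n))`.
-/

open Complex Finset
open scoped Real

lemma IsPrimitiveRoot.sum_range_zpow_pow_eq_zero {K : Type*} [Field K] {ζ : K} {n : ℕ}
    (hζ : IsPrimitiveRoot ζ n) {j : ℤ} (hj : ¬ (n : ℤ) ∣ j) :
    ∑ r ∈ range n, (ζ ^ j) ^ r = 0 := by
  have hne : ζ ^ j ≠ 1 := fun h => hj ((hζ.zpow_eq_one_iff_dvd j).mp h)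
  rw [geom_sum_eq hne, ← zpow_natCast, ← zpow_mul, mul_comm, zpow_mul, zpow_natCast,
    hζ.pow_eq_one, one_zpow, sub_self, zero_div]

lemma sum_range_cos_two_pi_mul_int_div_eq_zero {n : ℕ} (hn : n ≠ 0) {μ : ℤ}
    (hμ : ¬ (n : ℤ) ∣ μ) :
    ∑ r ∈ range n, cos (2 * π * r * μ / n) = 0 := by
  have hζ := isPrimitiveRoot_exp n hn
  have hcos (r : ℕ) : cos (2 * π * r * μ / n)
      = ((exp (2 * π * I / n) ^ μ) ^ r + (exp (2 * π * I / n) ^ (-μ)) ^ r) / 2 := by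
    rw [← exp_int_mul, ← exp_int_mul, ← exp_nat_mul, ← exp_nat_mul, cos]
    push_cast
    ring_nf
  simp only [hcos, ← sum_div, sum_add_distrib,
    hζ.sum_range_zpow_pow_eq_zero hμ, hζ.sum_range_zpow_pow_eq_zero (by rwa [dvd_neg]),
    add_zero, zero_div]

lemma cos_two_mul_int_mul_eq_one_of_sin_eq_zero {x : ℂ} (hx : sin x = 0) (μ : ℤ) :
    cos (2 * x * μ) = 1 := by
  obtain ⟨j, rfl⟩ := sin_eq_zero_iff.mp hx
  rw [show 2 * (j * π) * μ = ((j * μ : ℤ) : ℂ) * (2 * π) by push_cast; ring]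
  exact cos_int_mul_two_pi _

lemma exp_two_mul_inv_mul_one_sub_sq (θ : ℂ) :
    (exp (2 * θ * I))⁻¹ * (1 - exp (2 * θ * I)) ^ 2 = -4 * sin θ ^ 2 := by
  have hw : exp (θ * I) ≠ 0 := exp_ne_zero _
  rw [show 2 * θ * I = ((2 : ℕ) : ℂ) * (θ * I) by push_cast; ring, exp_nat_mul, sin, neg_mul θ,
    exp_neg]
  field_simp
  ring_nf
  rw [I_sq]
  ring

noncomputable def traceValue (n : ℕ) (μ : ℤ) (τ : ℂ) (k : ℕ) : ℂ :=
  τ / (n * sin (π * k / n) ^ 2) * (1 - cos (2 * π * k * μ / n))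

/-- The identity also holds where `sin (π k / n) = 0`: then `n ∣ k`, the cosine factor is `1`, and
the division by zero in `traceValue` is harmless. -/
lemma sin_sq_mul_traceValue (n : ℕ) (μ : ℤ) (τ : ℂ) (k : ℕ) :
    sin (π * k / n) ^ 2 * traceValue n μ τ k = τ / n * (1 - cos (2 * π * k * μ / n)) := by
  have hcos : cos (2 * π * k * μ / n) = cos (2 * (π * k / n) * μ) := by ring_nf
  by_cases hsin : sin (π * k / n) = 0
  · rw [hcos, cos_two_mul_int_mul_eq_one_of_sin_eq_zero hsin, hsin]
    simp
  · have hn : (n : ℂ) ≠ 0 := by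
      rintro hn
      simp [hn] at hsin
    unfold traceValue
    field_simp

lemma sum_sin_sq_mul_traceValue {n : ℕ} (hn : n ≠ 0) {μ : ℤ} (hμ : ¬ (n : ℤ) ∣ μ) (τ : ℂ) :
    ∑ r ∈ Icc 1 (n - 1), sin (π * r / n) ^ 2 * traceValue n μ τ r = τ := by
  calc _ = ∑ r ∈ range n, τ / n * (1 - cos (2 * π * r * μ / n)) := by
        simp only [sin_sq_mul_traceValue]
        refine sum_subset (fun r hr => by simp only [mem_Icc, mem_range] at hr ⊢; omega)
          fun r hr hr' => ?_
        obtain rfl : r = 0 := by simp only [mem_Icc, mem_range] at hr hr'; omega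
        simp
    _ = τ / n * n := by
        rw [← mul_sum, sum_sub_distrib, sum_range_cos_two_pi_mul_int_div_eq_zero hn hμ]
        simp
    _ = τ := by
        have : (n : ℂ) ≠ 0 := Nat.cast_ne_zero.mpr hn
        field_simp

theorem trace_values_solve_system_general (n : ℕ)
    (μ : ℤ) (hμ : ¬ (n : ℤ) ∣ μ) (τ : ℂ)
    (lam : ℂ) (hlam : lam = Complex.exp (2 * Real.pi * Complex.I / n))
    (s : ℕ → ℂ)
    (hs : ∀ k, s k = τ / (n * Complex.sin ((Real.pi : ℂ) * k / n) ^ 2)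
      * (1 - Complex.cos (2 * (Real.pi : ℂ) * k * μ / n)))
    (c : ℂ)
    (hc : c = -(2 * (μ : ℂ) / n)
      * ∑ r ∈ Finset.Icc 1 (n - 1), Complex.sin ((Real.pi : ℂ) * r / n) ^ 2 * s r) :
    ∀ k : ℕ, 1 ≤ k → k ≤ n - 1 →
      (2 / (μ : ℂ)) * (Complex.cos (2 * (Real.pi : ℂ) * k * μ / n) - 1) * c
        + lam ^ (-(k : ℤ)) * (1 - lam ^ k) ^ 2 * s k = 0 := by
  intro k hk1 hk2
  have hn : n ≠ 0 := by omega
  have hμ0 : (μ : ℂ) ≠ 0 :=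
    Int.cast_ne_zero.mpr fun h => hμ (h ▸ dvd_zero _)
  obtain rfl : s = traceValue n μ τ := funext hs
  have hc' : c = -(2 * μ / n) * τ := by rw [hc, sum_sin_sq_mul_traceValue hn hμ]
  have hlam' : lam ^ (-(k : ℤ)) * (1 - lam ^ k) ^ 2 = -4 * sin (π * k / n) ^ 2 := by
    rw [zpow_neg, zpow_natCast, hlam, ← exp_nat_mul,
      show k * (2 * π * I / n) = 2 * (π * k / n) * I by ring, exp_two_mul_inv_mul_one_sub_sq]
  rw [hlam', mul_assoc (-4 : ℂ), sin_sq_mul_traceValue, hc']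
  field_simp
  ring

/-- Let `n = 2m+1` be odd, `μ` an integer not divisible by `n`,
`λ = exp(2πi/n)`, `τ ∈ ℂ`. With
`s_k := (τ/(n sin²(πk/n)))·(1 - cos(2πkμ/n))` and
`c := -(2μ/n)·∑_{r=1}^{n-1} sin²(πr/n)·s_r`, one has for all `k = 1, …, n-1`:
`(2/μ)·(cos(2πkμ/n) - 1)·c + λ^{-k}(1-λ^k)²·s_k = 0`. -/
theorem trace_values_solve_system (m : ℕ) (hm : 1 ≤ m) (n : ℕ) (hn : n = 2 * m + 1)
    (μ : ℤ) (hμ : ¬ (n : ℤ) ∣ μ) (τ : ℂ)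
    (lam : ℂ) (hlam : lam = Complex.exp (2 * Real.pi * Complex.I / n))
    (s : ℕ → ℂ)
    (hs : ∀ k, s k = τ / (n * Complex.sin ((Real.pi : ℂ) * k / n) ^ 2)
      * (1 - Complex.cos (2 * (Real.pi : ℂ) * k * μ / n)))
    (c : ℂ)
    (hc : c = -(2 * (μ : ℂ) / n)
      * ∑ r ∈ Finset.Icc 1 (n - 1), Complex.sin ((Real.pi : ℂ) * r / n) ^ 2 * s r) :
    ∀ k : ℕ, 1 ≤ k → k ≤ n - 1 →
      (2 / (μ : ℂ)) * (Complex.cos (2 * (Real.pi : ℂ) * k * μ / n) - 1) * c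
        + lam ^ (-(k : ℤ)) * (1 - lam ^ k) ^ 2 * s k = 0 :=
  trace_values_solve_system_general n μ hμ τ lam hlam s hs c hc
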